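/- arXiv:2309.02613 — 4 statements merged into one kernel-verified Lean document; each statement's English description precedes it below -/
import Mathlib

section
/- Every moving phantom mechanism is monotone. That is, let A be the moving phantom mechanism given by a family of phantom systems, and let P and P' be two preference profiles on n voters and m projects for which there exist a voter i0 and a project j0 such that P_{ij} = P'_{ij} for all voters i ≠ i0 and all projects j, P_{i0,j0} < P'_{i0,j0}, and P_{i0,j} ≥ P'_{i0,j} for all projects j ≠ j0. Then A(P)_{j0} ≤ A(P')_{j0}. -/
open Finset

/-- With the convention used here, for a multiset of `2n+1` real numbers,
`med n s` is the `(n+1)`-st smallest element, i.e. the median. -/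
noncomputable def med (n : ℕ) (s : Multiset ℝ) : ℝ :=
  (s.sort (· ≤ ·)).getD n 0

/-- The median of the `n+1` phantom values `phantoms 0, …, phantoms n`
together with the `n` votes. -/
noncomputable def projMed (n : ℕ) (phantoms : ℕ → ℝ) (votes : Fin n → ℝ) : ℝ :=
  med n ((Multiset.range (n + 1)).map phantoms + Finset.univ.val.map votes)

/-- `P` is a preference profile: every entry lies in `[0,1]` and every row
lies in the standard simplex. -/
def IsProfile {n m : ℕ} (P : Fin n → Fin m → ℝ) : Prop :=
  (∀ i j, P i j ∈ Set.Icc (0 : ℝ) 1) ∧ ∀ i, ∑ j, P i j = 1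

/-- The mean funding of project `j` in profile `P`. -/
noncomputable def mean {n m : ℕ} (P : Fin n → Fin m → ℝ) (j : Fin m) : ℝ :=
  (∑ i, P i j) / (n : ℝ)

/-- `t` is a normalization point for the phantoms `f 0, …, f n` and profile `P`. -/
def IsNormPoint {n m : ℕ} (f : ℕ → ℝ → ℝ) (P : Fin n → Fin m → ℝ) (t : ℝ) : Prop :=
  t ∈ Set.Icc (0 : ℝ) 1 ∧
    ∑ j, projMed n (fun k => f k t) (fun i => P i j) = 1

/-- The output of the moving phantom mechanism with phantoms `f` on profile `P`,
evaluated at (normalization) point `t`, for project `j`. -/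
noncomputable def output {n m : ℕ} (f : ℕ → ℝ → ℝ) (P : Fin n → Fin m → ℝ)
    (t : ℝ) (j : Fin m) : ℝ :=
  projMed n (fun k => f k t) (fun i => P i j)

/-- `f 0, …, f n` is a phantom system for `n` voters. -/
structure IsPhantomSystem (n : ℕ) (f : ℕ → ℝ → ℝ) : Prop where
  continuousOn : ∀ k ≤ n, ContinuousOn (f k) (Set.Icc 0 1)
  monotoneOn : ∀ k ≤ n, MonotoneOn (f k) (Set.Icc 0 1)
  mem_Icc : ∀ k ≤ n, ∀ t ∈ Set.Icc (0 : ℝ) 1, f k t ∈ Set.Icc (0 : ℝ) 1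
  map_zero : ∀ k ≤ n, f k 0 = 0
  map_one : ∀ k ≤ n, f k 1 = 1
  ordered : ∀ k l, k ≤ l → l ≤ n → ∀ t ∈ Set.Icc (0 : ℝ) 1, f l t ≤ f k t

private lemma countP_le_of_rel (x : ℝ) {s s' : Multiset ℝ}
    (h : Multiset.Rel (· ≤ ·) s s') :
    (s.filter (x ≤ ·)).card ≤ (s'.filter (x ≤ ·)).card := by
  induction h with
  | zero => simp
  | @cons a b as bs hab hrel ih =>
    by_cases hxa : x ≤ a
    · rw [Multiset.filter_cons_of_pos _ hxa, Multiset.filter_cons_of_pos _ (hxa.trans hab)]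
      rw [Multiset.card_cons, Multiset.card_cons]
      exact Nat.succ_le_succ ih
    · rw [Multiset.filter_cons_of_neg _ hxa]
      by_cases hxb : x ≤ b
      · rw [Multiset.filter_cons_of_pos _ hxb, Multiset.card_cons]
        exact le_trans ih (Nat.le_succ _)
      · rw [Multiset.filter_cons_of_neg _ hxb]; exact ih

private lemma sorted_getD_le {l l' : List ℝ} (hl : l.Pairwise (· ≤ ·)) (hl' : l'.Pairwise (· ≤ ·))
    (hlen : l.length = l'.length)
    (hcount : ∀ x : ℝ, l.countP (fun a => decide (x ≤ a)) ≤ l'.countP (fun a => decide (x ≤ a)))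
    (k : ℕ) : l.getD k 0 ≤ l'.getD k 0 := by
  rcases lt_or_ge k l.length with hk | hk
  · have hk' : k < l'.length := hlen ▸ hk
    by_contra hcon
    push_neg at hcon
    set x := l.getD k 0 with hx
    have hxk : x = l[k] := by rw [hx, List.getD_eq_getElem _ _ hk]
    have hx'k : l'.getD k 0 = l'[k] := List.getD_eq_getElem _ _ hk'
    have claim1 : l.length - k ≤ l.countP (fun a => decide (x ≤ a)) := by
      have hsplit : l.countP (fun a => decide (x ≤ a)) =
          (l.take k).countP (fun a => decide (x ≤ a)) +
          (l.drop k).countP (fun a => decide (x ≤ a)) := by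
        conv_lhs => rw [← List.take_append_drop k l]
        rw [List.countP_append]
      have hall : (l.drop k).countP (fun a => decide (x ≤ a)) = (l.drop k).length := by
        rw [List.countP_eq_length]
        intro a ha
        obtain ⟨i, hi, rfl⟩ := List.mem_iff_getElem.mp ha
        have hdl : (l.drop k).length = l.length - k := List.length_drop
        have hki : k + i < l.length := by omega
        rw [List.getElem_drop]
        have hle : l[k] ≤ l[k + i]'hki := by
          have := hl.rel_get_of_le (a := ⟨k, hk⟩) (b := ⟨k + i, hki⟩) (by simp)
          simpa using this
        simpa [hxk] using hle
      rw [hsplit, hall, List.length_drop]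
      omega
    have claim2 : l'.countP (fun a => decide (x ≤ a)) ≤ l'.length - (k + 1) := by
      have hsplit : l'.countP (fun a => decide (x ≤ a)) =
          (l'.take (k+1)).countP (fun a => decide (x ≤ a)) +
          (l'.drop (k+1)).countP (fun a => decide (x ≤ a)) := by
        conv_lhs => rw [← List.take_append_drop (k+1) l']
        rw [List.countP_append]
      have hzero : (l'.take (k+1)).countP (fun a => decide (x ≤ a)) = 0 := by
        rw [List.countP_eq_zero]
        intro a ha
        obtain ⟨i, hi, rfl⟩ := List.mem_iff_getElem.mp ha
        have hik : i < k + 1 := lt_of_lt_of_le hi (by simp [List.length_take])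
        have hil : i < l'.length := lt_of_lt_of_le hi (by simp [List.length_take])
        rw [List.getElem_take]
        have : l'[i] ≤ l'[k] := by
          have := hl'.rel_get_of_le (a := ⟨i, hil⟩) (b := ⟨k, hk'⟩)
            (by simpa using Nat.lt_succ_iff.mp hik)
          simpa using this
        simp only [decide_eq_true_eq]
        push_neg
        calc l'[i] ≤ l'[k] := this
          _ < x := hx'k ▸ hcon
      rw [hsplit, hzero, Nat.zero_add]
      calc (l'.drop (k+1)).countP _ ≤ (l'.drop (k+1)).length := List.countP_le_length
        _ = l'.length - (k+1) := List.length_drop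
    have := hcount x
    omega
  · rw [List.getD_eq_default _ _ hk, List.getD_eq_default _ _ (hlen ▸ hk)]

private lemma med_mono {s s' : Multiset ℝ} (h : Multiset.Rel (· ≤ ·) s s') (n : ℕ) :
    med n s ≤ med n s' := by
  have hcard : Multiset.card s = Multiset.card s' := Multiset.card_eq_card_of_rel h
  apply sorted_getD_le (Multiset.pairwise_sort _ _) (Multiset.pairwise_sort _ _)
  · simp [hcard]
  · intro x
    have key : ∀ u : Multiset ℝ,
        (u.sort (· ≤ ·)).countP (fun a => decide (x ≤ a)) = (u.filter (x ≤ ·)).card := by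
      intro u
      conv_rhs => rw [← Multiset.sort_eq u (· ≤ ·), Multiset.filter_coe, Multiset.coe_card]
      exact List.countP_eq_length_filter
    rw [key, key]
    exact countP_le_of_rel x h

private lemma projMed_mono (n : ℕ) (ph ph' : ℕ → ℝ) (v v' : Fin n → ℝ)
    (hph : ∀ k < n + 1, ph k ≤ ph' k) (hv : ∀ i, v i ≤ v' i) :
    projMed n ph v ≤ projMed n ph' v' := by
  apply med_mono
  apply Multiset.Rel.add
  · rw [Multiset.rel_map]
    exact Multiset.rel_refl_of_refl_on fun x hx => hph x (Multiset.mem_range.mp hx)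
  · rw [Multiset.rel_map]
    exact Multiset.rel_refl_of_refl_on fun i _ => hv i

/-- Every moving phantom mechanism is monotone. -/
theorem moving_phantom_monotone
    (n m : ℕ) (hn : 0 < n) (hm : 0 < m)
    (f : ℕ → ℝ → ℝ) (hf : IsPhantomSystem n f)
    (P P' : Fin n → Fin m → ℝ) (hP : IsProfile P) (hP' : IsProfile P')
    (i0 : Fin n) (j0 : Fin m)
    (hsame : ∀ i, i ≠ i0 → ∀ j, P i j = P' i j)
    (hlt : P i0 j0 < P' i0 j0)
    (hge : ∀ j, j ≠ j0 → P' i0 j ≤ P i0 j)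
    (t t' : ℝ) (ht : IsNormPoint f P t) (ht' : IsNormPoint f P' t') :
    output f P t j0 ≤ output f P' t' j0 := by
  obtain ⟨htI, htS⟩ := ht
  obtain ⟨htI', htS'⟩ := ht'
  have key : ∀ s s' : ℝ, s ∈ Set.Icc (0:ℝ) 1 → s' ∈ Set.Icc (0:ℝ) 1 → s ≤ s' →
      ∀ k < n + 1, f k s ≤ f k s' := fun s s' hs hs' hss k hk =>
    hf.monotoneOn k (Nat.lt_succ_iff.mp hk) hs hs' hss
  rcases le_total t t' with htt | htt
  · apply projMed_mono
    · exact key t t' htI htI' htt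
    · intro i
      by_cases hi : i = i0
      · subst hi; exact hlt.le
      · exact (hsame i hi j0).le
  · have hj : ∀ j ∈ univ.erase j0, output f P' t' j ≤ output f P t j := by
      intro j hj
      have hjne : j ≠ j0 := (mem_erase.mp hj).1
      apply projMed_mono
      · exact key t' t htI' htI htt
      · intro i
        by_cases hi : i = i0
        · subst hi; exact hge j hjne
        · exact (hsame i hi j).ge
    have hsum := Finset.sum_le_sum hj
    have e1 : ∑ j ∈ univ.erase j0, output f P t j + output f P t j0 = 1 := by
      rw [Finset.sum_erase_add _ _ (mem_univ j0)]; exact htS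
    have e2 : ∑ j ∈ univ.erase j0, output f P' t' j + output f P' t' j0 = 1 := by
      rw [Finset.sum_erase_add _ _ (mem_univ j0)]; exact htS'
    linarith
end

section
/- Let A be a proportional moving phantom mechanism. Then A overfunds by at most α, where α(n,m) = 1/4 for all m when n is even, and α(n,m) = (1/4)(1 − 1/n²) for all m when n is odd. That is, for every preference profile P on n voters and m projects and every project j, A(P)_j − P̄_j ≤ 1/4 if n is even, and A(P)_j − P̄_j ≤ (1/4)(1 − 1/n²) if n is odd. -/
open Finset

/-- The phantom system of the Ladder mechanism for `n` voters. -/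
noncomputable def ladder (n : ℕ) (k : ℕ) (t : ℝ) : ℝ :=
  max (t - (k : ℝ) / (n : ℝ)) 0

/-- The phantom system of the Independent Markets mechanism for `n` voters. -/
noncomputable def indMarkets (n : ℕ) (k : ℕ) (t : ℝ) : ℝ :=
  t * ((n : ℝ) - (k : ℝ)) / (n : ℝ)

/-- The moving phantom mechanism given by the family `F` of phantom systems
overfunds by at most `α`. -/
def OverfundsByAtMost (F : ℕ → ℕ → ℝ → ℝ) (α : ℕ → ℕ → ℝ) : Prop :=
  ∀ n m : ℕ, 0 < n → 0 < m → ∀ P : Fin n → Fin m → ℝ, IsProfile P →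
    ∀ t, IsNormPoint (F n) P t → ∀ j, output (F n) P t j - mean P j ≤ α n m

/-- The moving phantom mechanism given by the family `F` of phantom systems
underfunds by at most `α`. -/
def UnderfundsByAtMost (F : ℕ → ℕ → ℝ → ℝ) (α : ℕ → ℕ → ℝ) : Prop :=
  ∀ n m : ℕ, 0 < n → 0 < m → ∀ P : Fin n → Fin m → ℝ, IsProfile P →
    ∀ t, IsNormPoint (F n) P t → ∀ j, mean P j - output (F n) P t j ≤ α n m

/-- The moving phantom mechanism given by the family `F` of phantom systems
is proportional: on profiles of single-minded voters it outputs the mean. -/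
def Proportional (F : ℕ → ℕ → ℝ → ℝ) : Prop :=
  ∀ n m : ℕ, 0 < n → 0 < m → ∀ P : Fin n → Fin m → ℝ, IsProfile P →
    (∀ i j, P i j = 0 ∨ P i j = 1) →
    ∀ t, IsNormPoint (F n) P t → ∀ j, output (F n) P t j = mean P j

/-- The moving phantom mechanism given by the family `F` of phantom systems
is zero-unanimous. -/
def ZeroUnanimous (F : ℕ → ℕ → ℝ → ℝ) : Prop :=
  ∀ n m : ℕ, 0 < n → 0 < m → ∀ P : Fin n → Fin m → ℝ, IsProfile P →
    ∀ j : Fin m, (∀ i, P i j = 0) →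
      ∀ t, IsNormPoint (F n) P t → output (F n) P t j = 0

section AuxProofs

open Classical in
lemma filter_card_le_of_med_le {n : ℕ} {s : Multiset ℝ} (hs : Multiset.card s = 2*n+1)
    {p : ℝ → Prop} (h : ∀ x, med n s ≤ x → ¬ p x) :
    (s.filter p).card ≤ n := by
  classical
  have hlen : (s.sort (· ≤ ·)).length = 2*n+1 := by rw [Multiset.length_sort, hs]
  have hsort : (s.sort (· ≤ ·)).Pairwise (· ≤ ·) := Multiset.pairwise_sort s _
  have hcard : (s.filter p).card = ((s.sort (· ≤ ·)).filter (fun x => decide (p x))).length := by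
    conv_lhs => rw [← Multiset.sort_eq s (· ≤ ·)]
    rfl
  rw [hcard]
  set l := s.sort (· ≤ ·) with hl
  have hn : n < l.length := by omega
  have hget : med n s = l.get ⟨n, hn⟩ := List.getD_eq_get l (0:ℝ) ⟨n, hn⟩
  have hdrop : ∀ x ∈ l.drop n, ¬ p x := by
    intro x hx
    obtain ⟨i, hi, hxi⟩ := List.mem_iff_getElem.mp hx
    have hlen' : n + i < l.length := by
      have := hi; simp only [List.length_drop] at this; omega
    have heq : (l.drop n)[i] = l[n+i] := List.getElem_drop
    rw [heq] at hxi
    have hle : l.get ⟨n, hn⟩ ≤ l.get ⟨n+i, hlen'⟩ :=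
      hsort.rel_get_of_le (by simp)
    subst hxi
    exact h _ (hget ▸ hle)
  have heq2 : l.filter (fun x => decide (p x)) = (l.take n).filter (fun x => decide (p x)) := by
    conv_lhs => rw [← List.take_append_drop n l]
    rw [List.filter_append]
    have : (l.drop n).filter (fun x => decide (p x)) = [] := by
      rw [List.filter_eq_nil_iff]
      intro a ha
      simpa using hdrop a ha
    rw [this, List.append_nil]
  rw [heq2]
  calc ((l.take n).filter _).length ≤ (l.take n).length := List.length_filter_le _ _
    _ ≤ n := by simp

open Classical in
lemma filter_card_le_of_le_med {n : ℕ} {s : Multiset ℝ} (hs : Multiset.card s = 2*n+1)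
    {p : ℝ → Prop} (h : ∀ x, x ≤ med n s → ¬ p x) :
    (s.filter p).card ≤ n := by
  classical
  have hlen : (s.sort (· ≤ ·)).length = 2*n+1 := by rw [Multiset.length_sort, hs]
  have hsort : (s.sort (· ≤ ·)).Pairwise (· ≤ ·) := Multiset.pairwise_sort s _
  have hcard : (s.filter p).card = ((s.sort (· ≤ ·)).filter (fun x => decide (p x))).length := by
    conv_lhs => rw [← Multiset.sort_eq s (· ≤ ·)]
    rfl
  rw [hcard]
  set l := s.sort (· ≤ ·) with hl
  have hn : n < l.length := by omega
  have hget : med n s = l.get ⟨n, hn⟩ := List.getD_eq_get l (0:ℝ) ⟨n, hn⟩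
  have htake : ∀ x ∈ l.take (n+1), ¬ p x := by
    intro x hx
    obtain ⟨i, hi, hxi⟩ := List.mem_iff_getElem.mp hx
    have hi' : i < n+1 := by
      have := hi; simp only [List.length_take] at this; omega
    have hlen' : i < l.length := by omega
    have heq : (l.take (n+1))[i] = l[i]'hlen' := List.getElem_take
    rw [heq] at hxi
    have hle : l.get ⟨i, hlen'⟩ ≤ l.get ⟨n, hn⟩ :=
      hsort.rel_get_of_le (by simp; omega)
    subst hxi
    exact h _ (hget ▸ hle)
  have heq2 : l.filter (fun x => decide (p x)) = (l.drop (n+1)).filter (fun x => decide (p x)) := by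
    conv_lhs => rw [← List.take_append_drop (n+1) l]
    rw [List.filter_append]
    have : (l.take (n+1)).filter (fun x => decide (p x)) = [] := by
      rw [List.filter_eq_nil_iff]
      intro a ha
      simpa using htake a ha
    rw [this, List.nil_append]
  rw [heq2]
  calc ((l.drop (n+1)).filter _).length ≤ (l.drop (n+1)).length := List.length_filter_le _ _
    _ ≤ n := by simp [hlen]; omega

noncomputable def pmset (n : ℕ) (g : ℕ → ℝ) (v : Fin n → ℝ) : Multiset ℝ :=
  (Multiset.range (n+1)).map g + Finset.univ.val.map v

lemma pmset_card (n : ℕ) (g : ℕ → ℝ) (v : Fin n → ℝ) :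
    Multiset.card (pmset n g v) = 2*n+1 := by
  simp [pmset]; omega

lemma projMed_eq_med (n : ℕ) (g : ℕ → ℝ) (v : Fin n → ℝ) :
    projMed n g v = med n (pmset n g v) := rfl

open Classical in
lemma pmset_filter_card (n : ℕ) (g : ℕ → ℝ) (v : Fin n → ℝ) (p : ℝ → Prop) :
    ((pmset n g v).filter p).card
      = ((Finset.range (n+1)).filter (fun k => p (g k))).card
        + ((univ : Finset (Fin n)).filter (fun i => p (v i))).card := by
  classical
  rw [pmset, Multiset.filter_add, Multiset.card_add]
  congr 1
  · rw [← Multiset.countP_eq_card_filter, Multiset.countP_map,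
      ← Finset.range_val]
    rfl
  · rw [← Multiset.countP_eq_card_filter, Multiset.countP_map]
    rfl

open Classical in
lemma le_projMed {n : ℕ} {g : ℕ → ℝ} {v : Fin n → ℝ} {v0 : ℝ}
    (h : n+1 ≤ ((Finset.range (n+1)).filter (fun k => v0 ≤ g k)).card
        + ((univ : Finset (Fin n)).filter (fun i => v0 ≤ v i)).card) :
    v0 ≤ projMed n g v := by
  classical
  by_contra hlt
  push_neg at hlt
  have := filter_card_le_of_le_med (pmset_card n g v) (p := fun x => v0 ≤ x)
    (fun x hx hpx => absurd (lt_of_lt_of_le hlt (le_trans hpx hx)) (lt_irrefl _))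
  rw [pmset_filter_card] at this
  omega

open Classical in
lemma projMed_le {n : ℕ} {g : ℕ → ℝ} {v : Fin n → ℝ} {v0 : ℝ}
    (h : n+1 ≤ ((Finset.range (n+1)).filter (fun k => g k ≤ v0)).card
        + ((univ : Finset (Fin n)).filter (fun i => v i ≤ v0)).card) :
    projMed n g v ≤ v0 := by
  classical
  by_contra hlt
  push_neg at hlt
  have := filter_card_le_of_med_le (pmset_card n g v) (p := fun x => x ≤ v0)
    (fun x hx hpx => absurd (lt_of_lt_of_le hlt (le_trans hx hpx)) (lt_irrefl _))
  rw [pmset_filter_card] at this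
  omega

open Classical in
lemma projMed_le_phantom {n : ℕ} {g : ℕ → ℝ} {v : Fin n → ℝ}
    (hg : ∀ k l, k ≤ l → l ≤ n → g l ≤ g k) :
    projMed n g v
      ≤ g (n - ((univ : Finset (Fin n)).filter (fun i => projMed n g v ≤ v i)).card) := by
  classical
  set y := projMed n g v with hy
  set a := ((univ : Finset (Fin n)).filter (fun i => y ≤ v i)).card with ha
  have han : a ≤ n := le_trans (Finset.card_filter_le _ _) (by simp)
  by_contra hlt
  push_neg at hlt
  have hcore := filter_card_le_of_med_le (pmset_card n g v) (p := fun x => x < y)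
    (fun x hx hpx => absurd (lt_of_le_of_lt hx hpx) (lt_irrefl _))
  rw [pmset_filter_card] at hcore
  have hph : a + 1 ≤ ((Finset.range (n+1)).filter (fun k => g k < y)).card := by
    have hsub : Finset.Icc (n - a) n ⊆ (Finset.range (n+1)).filter (fun k => g k < y) := by
      intro k hk
      simp only [Finset.mem_Icc] at hk
      simp only [Finset.mem_filter, Finset.mem_range]
      exact ⟨by omega, lt_of_le_of_lt (hg _ _ hk.1 hk.2) hlt⟩
    have := Finset.card_le_card hsub
    rwa [Nat.card_Icc, show n + 1 - (n - a) = a + 1 by omega] at this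
  have hvt : ((univ : Finset (Fin n)).filter (fun i => v i < y)).card = n - a := by
    have hpart := Finset.card_filter_add_card_filter_not
      (s := (univ : Finset (Fin n))) (p := fun i : Fin n => y ≤ v i)
    have hcongr : ((univ : Finset (Fin n)).filter (fun i => ¬ y ≤ v i))
        = ((univ : Finset (Fin n)).filter (fun i => v i < y)) := by
      apply Finset.filter_congr; intro i _; simp [not_le]
    rw [hcongr] at hpart
    have hcu : (univ : Finset (Fin n)).card = n := by simp
    omega
  omega

open Classical in
lemma phantom_le_projMed {n : ℕ} {g : ℕ → ℝ} {v : Fin n → ℝ}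
    (hg : ∀ k l, k ≤ l → l ≤ n → g l ≤ g k) :
    g (n - ((univ : Finset (Fin n)).filter (fun i => projMed n g v < v i)).card)
      ≤ projMed n g v := by
  classical
  set y := projMed n g v with hy
  set b := ((univ : Finset (Fin n)).filter (fun i => y < v i)).card with hb
  have hbn : b ≤ n := le_trans (Finset.card_filter_le _ _) (by simp)
  by_contra hlt
  push_neg at hlt
  have hcore := filter_card_le_of_le_med (pmset_card n g v) (p := fun x => y < x)
    (fun x hx hpx => absurd (lt_of_lt_of_le hpx hx) (lt_irrefl _))
  rw [pmset_filter_card] at hcore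
  have hph : n - b + 1 ≤ ((Finset.range (n+1)).filter (fun k => y < g k)).card := by
    have hsub : Finset.range (n - b + 1) ⊆ (Finset.range (n+1)).filter (fun k => y < g k) := by
      intro k hk
      simp only [Finset.mem_range] at hk
      simp only [Finset.mem_filter, Finset.mem_range]
      exact ⟨by omega, lt_of_lt_of_le hlt (hg _ _ (by omega) (by omega))⟩
    have := Finset.card_le_card hsub
    rwa [Finset.card_range] at this
  omega

open Classical in
lemma projMed_nonneg {n : ℕ} {g : ℕ → ℝ} {v : Fin n → ℝ}
    (hg : ∀ k ≤ n, 0 ≤ g k) (hv : ∀ i, 0 ≤ v i) : 0 ≤ projMed n g v := by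
  classical
  apply le_projMed
  have : (Finset.range (n+1)).filter (fun k => (0:ℝ) ≤ g k) = Finset.range (n+1) := by
    apply Finset.filter_true_of_mem
    intro k hk; exact hg k (by simpa using Nat.lt_succ_iff.mp (Finset.mem_range.mp hk))
  rw [this, Finset.card_range]
  omega

open Classical in
lemma projMed_single {n c : ℕ} (hc : c ≤ n) {g : ℕ → ℝ}
    (hg : ∀ k l, k ≤ l → l ≤ n → g l ≤ g k)
    (h0 : ∀ k ≤ n, 0 ≤ g k) (h1 : ∀ k ≤ n, g k ≤ 1)
    {v : Fin n → ℝ} (hv : ∀ i, v i = 0 ∨ v i = 1)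
    (hcard : ((univ : Finset (Fin n)).filter (fun i => v i = 1)).card = c) :
    projMed n g v = g (n - c) := by
  classical
  have hzero : ((univ : Finset (Fin n)).filter (fun i => v i = 0)).card = n - c := by
    have hpart := Finset.card_filter_add_card_filter_not
      (s := (univ : Finset (Fin n))) (p := fun i : Fin n => v i = 1)
    have hcongr : ((univ : Finset (Fin n)).filter (fun i => ¬ v i = 1))
        = ((univ : Finset (Fin n)).filter (fun i => v i = 0)) := by
      apply Finset.filter_congr; intro i _
      rcases hv i with h | h <;> simp [h]
    rw [hcongr] at hpart
    have hcu : (univ : Finset (Fin n)).card = n := by simp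
    omega
  apply le_antisymm
  · apply projMed_le (v0 := g (n - c))
    have hph : c + 1 ≤ ((Finset.range (n+1)).filter (fun k => g k ≤ g (n - c))).card := by
      have hsub : Finset.Icc (n - c) n ⊆ (Finset.range (n+1)).filter (fun k => g k ≤ g (n - c)) := by
        intro k hk
        simp only [Finset.mem_Icc] at hk
        simp only [Finset.mem_filter, Finset.mem_range]
        exact ⟨by omega, hg _ _ hk.1 hk.2⟩
      have := Finset.card_le_card hsub
      rwa [Nat.card_Icc, show n + 1 - (n - c) = c + 1 by omega] at this
    have hvt : n - c ≤ ((univ : Finset (Fin n)).filter (fun i => v i ≤ g (n - c))).card := by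
      rw [← hzero]
      apply Finset.card_le_card
      intro i hi
      simp only [Finset.mem_filter] at hi ⊢
      exact ⟨hi.1, by rw [hi.2]; exact h0 _ (by omega)⟩
    omega
  · apply le_projMed (v0 := g (n - c))
    have hph : n - c + 1 ≤ ((Finset.range (n+1)).filter (fun k => g (n - c) ≤ g k)).card := by
      have hsub : Finset.range (n - c + 1) ⊆ (Finset.range (n+1)).filter (fun k => g (n - c) ≤ g k) := by
        intro k hk
        simp only [Finset.mem_range] at hk
        simp only [Finset.mem_filter, Finset.mem_range]
        exact ⟨by omega, hg _ _ (by omega) (by omega)⟩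
      have := Finset.card_le_card hsub
      rwa [Finset.card_range] at this
    have hvt : c ≤ ((univ : Finset (Fin n)).filter (fun i => g (n - c) ≤ v i)).card := by
      rw [← hcard]
      apply Finset.card_le_card
      intro i hi
      simp only [Finset.mem_filter] at hi ⊢
      exact ⟨hi.1, by rw [hi.2]; exact h1 _ (by omega)⟩
    omega

lemma card_filter_val (n : ℕ) (p : ℕ → Prop) [DecidablePred p] :
    ((univ : Finset (Fin n)).filter (fun i => p i.val)).card
      = ((Finset.Iio n).filter p).card := by
  rw [← Fin.map_valEmbedding_univ, Finset.filter_map, Finset.card_map]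
  rfl

def smCol (a c : ℕ) (x : ℕ) : Fin 3 := if x < a then 0 else if x < a + c then 1 else 2

noncomputable def smP (n a c : ℕ) : Fin n → Fin 3 → ℝ :=
  fun i j => if j = smCol a c i.val then 1 else 0

lemma smCol_zero (a c x : ℕ) : smCol a c x = 0 ↔ x < a := by
  unfold smCol
  split_ifs with h1 h2 <;> simp [Fin.ext_iff] <;> omega

lemma smCol_one (a c x : ℕ) : smCol a c x = 1 ↔ (a ≤ x ∧ x < a + c) := by
  unfold smCol
  split_ifs with h1 h2 <;> simp [Fin.ext_iff] <;> omega

lemma smP_profile (n a c : ℕ) : IsProfile (smP n a c) := by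
  constructor
  · intro i j; unfold smP; split <;> norm_num
  · intro i; simp [smP, Finset.sum_ite_eq']

lemma smP_single (n a c : ℕ) : ∀ i j, smP n a c i j = 0 ∨ smP n a c i j = 1 := by
  intro i j; unfold smP; split
  · right; rfl
  · left; rfl

lemma smP_eq_one_iff (n a c : ℕ) (i : Fin n) (j : Fin 3) :
    smP n a c i j = 1 ↔ j = smCol a c i.val := by
  unfold smP; split <;> simp_all

open Classical in
lemma smP_count0 (n a c : ℕ) (h : a ≤ n) :
    ((univ : Finset (Fin n)).filter (fun i => smP n a c i 0 = 1)).card = a := by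
  classical
  have hcongr : (univ : Finset (Fin n)).filter (fun i => smP n a c i 0 = 1)
      = (univ : Finset (Fin n)).filter (fun i => i.val < a) := by
    apply Finset.filter_congr
    intro i _
    rw [smP_eq_one_iff, eq_comm, smCol_zero]
  rw [hcongr, card_filter_val n (fun x => x < a)]
  have : (Finset.Iio n).filter (fun x => x < a) = Finset.Iio a := by
    ext x; simp only [Finset.mem_filter, Finset.mem_Iio]; omega
  rw [this, Nat.card_Iio]

open Classical in
lemma smP_count1 (n a c : ℕ) (h : a + c ≤ n) :
    ((univ : Finset (Fin n)).filter (fun i => smP n a c i 1 = 1)).card = c := by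
  classical
  have hcongr : (univ : Finset (Fin n)).filter (fun i => smP n a c i 1 = 1)
      = (univ : Finset (Fin n)).filter (fun i => a ≤ i.val ∧ i.val < a + c) := by
    apply Finset.filter_congr
    intro i _
    rw [smP_eq_one_iff, eq_comm, smCol_one]
  rw [hcongr, card_filter_val n (fun x => a ≤ x ∧ x < a + c)]
  have : (Finset.Iio n).filter (fun x => a ≤ x ∧ x < a + c) = Finset.Ico a (a+c) := by
    ext x; simp only [Finset.mem_filter, Finset.mem_Iio, Finset.mem_Ico]; omega
  rw [this, Nat.card_Ico]; omega

open Classical in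
lemma smP_sum (n a c : ℕ) (j : Fin 3) :
    ∑ i : Fin n, smP n a c i j
      = (((univ : Finset (Fin n)).filter (fun i => smP n a c i j = 1)).card : ℝ) := by
  classical
  rw [← Finset.sum_boole]
  apply Finset.sum_congr rfl
  intro i _
  rcases smP_single n a c i j with h | h <;> simp [h]

lemma smCol_two (a c x : ℕ) : smCol a c x = 2 ↔ a + c ≤ x := by
  unfold smCol
  split_ifs with h1 h2 <;> simp [Fin.ext_iff] <;> omega

open Classical in
lemma smP_count2 (n a c : ℕ) (h : a + c ≤ n) :
    ((univ : Finset (Fin n)).filter (fun i => smP n a c i 2 = 1)).card = n - a - c := by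
  classical
  have hcongr : (univ : Finset (Fin n)).filter (fun i => smP n a c i 2 = 1)
      = (univ : Finset (Fin n)).filter (fun i => a + c ≤ i.val) := by
    apply Finset.filter_congr
    intro i _
    rw [smP_eq_one_iff, eq_comm, smCol_two]
  rw [hcongr, card_filter_val n (fun x => a + c ≤ x)]
  have : (Finset.Iio n).filter (fun x => a + c ≤ x) = Finset.Ico (a+c) n := by
    ext x; simp only [Finset.mem_filter, Finset.mem_Iio, Finset.mem_Ico]; omega
  rw [this, Nat.card_Ico]; omega

lemma aux_phantom_eq {F : ℕ → ℕ → ℝ → ℝ} (hF : ∀ n, 0 < n → IsPhantomSystem n (F n))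
    (hprop : Proportional F) {n : ℕ} (hn : 0 < n) (a c : ℕ) (hac : a + c ≤ n) :
    ∃ t' ∈ Set.Icc (0:ℝ) 1, F n (n - a) t' = (a : ℝ) / n ∧ F n (n - c) t' = (c : ℝ) / n := by
  classical
  have hPS := hF n hn
  set f := F n with hf
  -- the sum function
  set S : ℝ → ℝ := fun t => f (n - a) t + f (n - c) t + f (n - (n - a - c)) t with hS
  have hcont : ContinuousOn S (Set.Icc 0 1) :=
    (((hPS.continuousOn _ (by omega)).add (hPS.continuousOn _ (by omega))).add
      (hPS.continuousOn _ (by omega)))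
  have hS0 : S 0 = 0 := by
    simp [hS, hPS.map_zero _ (by omega : n - a ≤ n), hPS.map_zero _ (by omega : n - c ≤ n),
      hPS.map_zero _ (by omega : n - (n - a - c) ≤ n)]
  have hS1 : S 1 = 3 := by
    simp [hS, hPS.map_one _ (by omega : n - a ≤ n), hPS.map_one _ (by omega : n - c ≤ n),
      hPS.map_one _ (by omega : n - (n - a - c) ≤ n)]
    norm_num
  have hsub := intermediate_value_Icc (by norm_num : (0:ℝ) ≤ 1) hcont
  have h1mem : (1:ℝ) ∈ Set.Icc (S 0) (S 1) := by rw [hS0, hS1]; norm_num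
  obtain ⟨t', ht', hSt'⟩ := hsub h1mem
  -- projMed values at t'
  have hval : ∀ j : Fin 3,
      projMed n (fun k => f k t') (fun i => smP n a c i j)
        = f (n - ((univ : Finset (Fin n)).filter (fun i => smP n a c i j = 1)).card) t' := by
    intro j
    apply projMed_single (Finset.card_filter_le _ _ |>.trans (by simp))
      (fun k l hkl hln => hPS.ordered k l hkl hln t' ht')
      (fun k hk => (hPS.mem_Icc k hk t' ht').1)
      (fun k hk => (hPS.mem_Icc k hk t' ht').2)
      (fun i => smP_single n a c i j)
      rfl
  have hnorm : IsNormPoint f (smP n a c) t' := by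
    refine ⟨ht', ?_⟩
    rw [Fin.sum_univ_three, hval 0, hval 1, hval 2,
      smP_count0 n a c (by omega), smP_count1 n a c hac, smP_count2 n a c hac]
    exact hSt'
  have hout := hprop n 3 hn (by norm_num) (smP n a c) (smP_profile n a c)
    (smP_single n a c) t' hnorm
  refine ⟨t', ht', ?_, ?_⟩
  · have h0 := hout 0
    rw [output, hval 0, smP_count0 n a c (by omega)] at h0
    rw [h0, mean, smP_sum, smP_count0 n a c (by omega)]
  · have h1 := hout 1
    rw [output, hval 1, smP_count1 n a c hac] at h1
    rw [h1, mean, smP_sum, smP_count1 n a c hac]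


end AuxProofs

/-- Any proportional moving phantom mechanism overfunds by at most
`1/4` (for even `n`) resp. `(1/4)(1 - 1/n²)` (for odd `n`). -/
theorem proportional_overfunds_by_quarter
    (F : ℕ → ℕ → ℝ → ℝ) (hF : ∀ n, 0 < n → IsPhantomSystem n (F n))
    (hprop : Proportional F)
    (n m : ℕ) (hn : 0 < n) (hm : 0 < m)
    (P : Fin n → Fin m → ℝ) (hP : IsProfile P)
    (t : ℝ) (ht : IsNormPoint (F n) P t) (j : Fin m) :
    (Even n → output (F n) P t j - mean P j ≤ 1 / 4) ∧
    (Odd n → output (F n) P t j - mean P j ≤ 1 / 4 * (1 - 1 / (n : ℝ) ^ 2)) := by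
  classical
  have hPS := hF n hn
  obtain ⟨htI, htsum⟩ := ht
  set g : ℕ → ℝ := fun k => F n k t with hg
  have hgord : ∀ k l, k ≤ l → l ≤ n → g l ≤ g k :=
    fun k l hkl hln => hPS.ordered k l hkl hln t htI
  have hg0 : ∀ k ≤ n, 0 ≤ g k := fun k hk => (hPS.mem_Icc k hk t htI).1
  set Y : Fin m → ℝ := fun j' => projMed n g (fun i => P i j') with hY
  have hsum1 : ∑ j', Y j' = 1 := htsum
  have hYnonneg : ∀ j', 0 ≤ Y j' :=
    fun j' => projMed_nonneg hg0 (fun i => (hP.1 i j').1)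
  set a : ℕ := ((univ : Finset (Fin n)).filter (fun i => Y j ≤ P i j)).card with ha
  have han : a ≤ n := (Finset.card_filter_le _ _).trans (by simp)
  have hn0 : (0:ℝ) < n := by exact_mod_cast hn
  -- mean bound
  have hmean : (a:ℝ) * Y j ≤ ∑ i, P i j := by
    calc (a:ℝ) * Y j = ∑ _i ∈ (univ : Finset (Fin n)).filter (fun i => Y j ≤ P i j), Y j := by
          rw [Finset.sum_const, nsmul_eq_mul]
      _ ≤ ∑ i ∈ (univ : Finset (Fin n)).filter (fun i => Y j ≤ P i j), P i j :=
          Finset.sum_le_sum (fun i hi => (Finset.mem_filter.mp hi).2)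
      _ ≤ ∑ i, P i j :=
          Finset.sum_le_sum_of_subset_of_nonneg (Finset.filter_subset _ _)
            (fun i _ _ => (hP.1 i j).1)
  -- KEY: n * Y j ≤ a
  have hkey : (n:ℝ) * Y j ≤ a := by
    by_cases hcase : g (n - a) ≤ (a:ℝ)/n
    · have hya : Y j ≤ g (n - a) := projMed_le_phantom hgord
      have := hya.trans hcase
      rw [le_div_iff₀ hn0] at this
      linarith
    · push_neg at hcase
      have hcomp : ∀ c' ≤ n - a, (c':ℝ)/n ≤ g (n - c') := by
        intro c' hc'
        obtain ⟨t', ht', he1, he2⟩ := aux_phantom_eq hF hprop hn a c' (by omega)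
        have htt : t' ≤ t := by
          by_contra hlt
          push_neg at hlt
          have hmono := hPS.monotoneOn (n-a) (by omega) htI ht' hlt.le
          rw [he1] at hmono
          exact absurd hmono (not_le.mpr hcase)
        have hmono := hPS.monotoneOn (n-c') (by omega) ht' htI htt
        rw [he2] at hmono
        exact hmono
      set B : Fin m → ℕ :=
        fun j' => ((univ : Finset (Fin n)).filter (fun i => Y j' < P i j')).card with hB
      have hother : ∀ j' ∈ univ.erase j, ((min (B j') (n-a) : ℕ):ℝ)/n ≤ Y j' := by
        intro j' _
        have hbound : g (n - B j') ≤ Y j' := phantom_le_projMed hgord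
        have hBn : B j' ≤ n := (Finset.card_filter_le _ _).trans (by simp)
        by_cases hble : B j' ≤ n - a
        · rw [min_eq_left hble]
          exact (hcomp (B j') hble).trans hbound
        · push_neg at hble
          rw [min_eq_right hble.le]
          have h1 : ((n-a:ℕ):ℝ)/n ≤ g (n - (n-a)) := hcomp (n-a) le_rfl
          have h2 : g (n - (n - a)) ≤ g (n - B j') := by
            apply hgord _ _ (by omega) (by omega)
          exact (h1.trans h2).trans hbound
      have hsmin : (n - a : ℕ) ≤ ∑ j' ∈ univ.erase j, min (B j') (n-a) := by
        by_cases hex : ∃ j' ∈ univ.erase j, n - a ≤ B j'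
        · obtain ⟨j', hj', hbig⟩ := hex
          calc (n-a:ℕ) = min (B j') (n-a) := (min_eq_right hbig).symm
            _ ≤ ∑ j' ∈ univ.erase j, min (B j') (n-a) :=
                Finset.single_le_sum (f := fun j' => min (B j') (n-a))
                  (fun _ _ => Nat.zero_le _) hj'
        · push_neg at hex
          have hTsub : ((univ : Finset (Fin n)).filter (fun i => P i j < Y j))
              ⊆ (univ.erase j).biUnion
                  (fun j' => (univ : Finset (Fin n)).filter (fun i => Y j' < P i j')) := by
            intro i hi
            rw [Finset.mem_filter] at hi
            by_contra hni
            rw [Finset.mem_biUnion] at hni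
            push_neg at hni
            have hle : ∀ j' ∈ univ.erase j, P i j' ≤ Y j' := by
              intro j' hj'
              have h3 := hni j' hj'
              rw [Finset.mem_filter] at h3
              push_neg at h3
              exact h3 (Finset.mem_univ i)
            have h2 : ∑ j', P i j' < ∑ j', Y j' := by
              rw [← Finset.sum_erase_add _ _ (Finset.mem_univ j),
                ← Finset.sum_erase_add _ _ (Finset.mem_univ j)]
              exact add_lt_add_of_le_of_lt (Finset.sum_le_sum hle) hi.2
            rw [hsum1, hP.2 i] at h2
            exact absurd h2 (lt_irrefl _)
          have hTcard : ((univ : Finset (Fin n)).filter (fun i => P i j < Y j)).card = n - a := by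
            have hpart := Finset.card_filter_add_card_filter_not
              (s := (univ : Finset (Fin n))) (p := fun i : Fin n => Y j ≤ P i j)
            have hcongr : ((univ : Finset (Fin n)).filter (fun i => ¬ Y j ≤ P i j))
                = ((univ : Finset (Fin n)).filter (fun i => P i j < Y j)) := by
              apply Finset.filter_congr; intro i _; simp [not_le]
            rw [hcongr] at hpart
            have hcu : (univ : Finset (Fin n)).card = n := by simp
            omega
          calc (n-a:ℕ) = ((univ : Finset (Fin n)).filter (fun i => P i j < Y j)).card :=
                hTcard.symm
            _ ≤ ((univ.erase j).biUnion
                  (fun j' => (univ : Finset (Fin n)).filter (fun i => Y j' < P i j'))).card :=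
                Finset.card_le_card hTsub
            _ ≤ ∑ j' ∈ univ.erase j, B j' := Finset.card_biUnion_le
            _ = ∑ j' ∈ univ.erase j, min (B j') (n-a) :=
                Finset.sum_congr rfl (fun j' hj' => (min_eq_left (hex j' hj').le).symm)
      have hfinal : Y j + ((n-a:ℕ):ℝ)/n ≤ 1 := by
        have hstep : ((n-a:ℕ):ℝ)/n ≤ ∑ j' ∈ univ.erase j, Y j' := by
          calc ((n-a:ℕ):ℝ)/n ≤ ((∑ j' ∈ univ.erase j, min (B j') (n-a) : ℕ):ℝ)/n := by
                gcongr <;> exact_mod_cast hsmin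
            _ = ∑ j' ∈ univ.erase j, ((min (B j') (n-a) : ℕ):ℝ)/n := by
                rw [Nat.cast_sum, Finset.sum_div]
            _ ≤ ∑ j' ∈ univ.erase j, Y j' := Finset.sum_le_sum hother
        have hsplit : ∑ j' ∈ univ.erase j, Y j' + Y j = 1 := by
          rw [Finset.sum_erase_add _ _ (Finset.mem_univ j)]
          exact hsum1
        linarith
      have hcast : ((n-a:ℕ):ℝ) = (n:ℝ) - a := by
        rw [Nat.cast_sub han]
      rw [hcast] at hfinal
      -- Y j ≤ 1 - (n-a)/n = a/n
      have : Y j ≤ (a:ℝ)/n := by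
        have := hfinal
        have hdiv : ((n:ℝ) - a)/n = 1 - (a:ℝ)/n := by field_simp
        rw [hdiv] at this
        linarith
      rw [le_div_iff₀ hn0] at this
      linarith
  -- final arithmetic
  have hmean2 : (a:ℝ) * Y j ≤ (n:ℝ) * mean P j := by
    have : (n:ℝ) * mean P j = ∑ i, P i j := by
      rw [mean]; field_simp
    rw [this]; exact hmean
  have hYout : output (F n) P t j = Y j := rfl
  have hanR : (a:ℝ) ≤ n := by exact_mod_cast han
  have hY0 : 0 ≤ Y j := hYnonneg j
  have hm1 : (n:ℝ) * Y j * ((n:ℝ) - a) ≤ (a:ℝ) * ((n:ℝ) - a) :=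
    mul_le_mul_of_nonneg_right hkey (by linarith)
  have e1 : (n:ℝ) * (n:ℝ) * (Y j - mean P j) ≤ (a:ℝ) * ((n:ℝ) - a) := by
    nlinarith [mul_le_mul_of_nonneg_left hmean2 hn0.le]
  rw [hYout]
  constructor
  · intro _
    nlinarith [e1, sq_nonneg ((n:ℝ) - 2*a), mul_pos hn0 hn0]
  · intro hodd
    have hne : (n:ℤ) - 2*(a:ℤ) ≠ 0 := by
      rcases hodd with ⟨w, hw⟩
      omega
    have habsZ : (1:ℤ) ≤ ((n:ℤ) - 2*a)^2 := by
      have h1 : 1 ≤ |(n:ℤ) - 2*a| := Int.one_le_abs hne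
      nlinarith [sq_abs ((n:ℤ) - 2*(a:ℤ))]
    have habs : (1:ℝ) ≤ ((n:ℝ) - 2*a)^2 := by exact_mod_cast habsZ
    have hrw : (1:ℝ)/4 * (1 - 1/(n:ℝ)^2) = ((n:ℝ)^2 - 1)/(4*(n:ℝ)^2) := by
      field_simp
    rw [hrw, le_div_iff₀ (by positivity)]
    nlinarith [e1, habs, hn0]
end

section
/- The Ladder mechanism underfunds by at most α, where α(n,m) = (1/2)(1 − 1/m) for all n,m ∈ ℕ. That is, for every preference profile P on n voters and m projects and every project j, P̄_j − A(P)_j ≤ (1/2)(1 − 1/m), where A is the Ladder mechanism. -/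
open Finset

lemma med_mem {n : ℕ} {s : Multiset ℝ} (h : Multiset.card s = 2*n+1) : med n s ∈ s := by
  have hlen : (s.sort (· ≤ ·)).length = 2*n+1 := by rw [Multiset.length_sort, h]
  have hn : n < (s.sort (· ≤ ·)).length := by omega
  rw [med, List.getD_eq_getElem _ _ hn]
  have := List.getElem_mem hn
  rwa [← Multiset.mem_coe, Multiset.sort_eq] at this

lemma med_countP_gt {n : ℕ} {s : Multiset ℝ} (h : Multiset.card s = 2*n+1) :
    Multiset.countP (fun x => med n s < x) s ≤ n := by
  classical
  set l := s.sort (· ≤ ·) with hl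
  have hlen : l.length = 2*n+1 := by rw [hl, Multiset.length_sort, h]
  have hn : n < l.length := by omega
  have hmed : med n s = l[n] := by rw [med, List.getD_eq_getElem _ _ hn]
  have hseq : (↑l : Multiset ℝ) = s := Multiset.sort_eq s _
  have hmed2 : med n (↑l : Multiset ℝ) = l[n] := by rw [hseq]; exact hmed
  rw [← hseq, hmed2, Multiset.coe_countP]
  have hsplit := List.take_append_drop (n+1) l
  have hcnt : List.countP (fun x => decide (l[n] < x)) l
      = List.countP (fun x => decide (l[n] < x)) (l.take (n+1))
        + List.countP (fun x => decide (l[n] < x)) (l.drop (n+1)) := by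
    rw [← List.countP_append, hsplit]
  have h0 : List.countP (fun x => decide (l[n] < x)) (l.take (n+1)) = 0 := by
    rw [List.countP_eq_zero]
    intro a ha
    rw [List.mem_take_iff_getElem] at ha
    obtain ⟨i, hi, rfl⟩ := ha
    have hi' : i < l.length := lt_min_iff.mp hi |>.2
    have : l.get ⟨i, hi'⟩ ≤ l.get ⟨n, hn⟩ := by
      apply (Multiset.pairwise_sort s (· ≤ ·)).rel_get_of_le
      have : i < n + 1 := lt_min_iff.mp hi |>.1
      exact Fin.mk_le_mk.mpr (by omega)
    simp only [List.get_eq_getElem] at this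
    simp [not_lt, this]
  have h1 : List.countP (fun x => decide (l[n] < x)) (l.drop (n+1)) ≤ n := by
    calc _ ≤ (l.drop (n+1)).length := List.countP_le_length
    _ ≤ n := by rw [List.length_drop, hlen]; omega
  omega

lemma med_countP_lt {n : ℕ} {s : Multiset ℝ} (h : Multiset.card s = 2*n+1) :
    Multiset.countP (fun x => x < med n s) s ≤ n := by
  classical
  set l := s.sort (· ≤ ·) with hl
  have hlen : l.length = 2*n+1 := by rw [hl, Multiset.length_sort, h]
  have hn : n < l.length := by omega
  have hmed : med n s = l[n] := by rw [med, List.getD_eq_getElem _ _ hn]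
  have hseq : (↑l : Multiset ℝ) = s := Multiset.sort_eq s _
  have hmed2 : med n (↑l : Multiset ℝ) = l[n] := by rw [hseq]; exact hmed
  rw [← hseq, hmed2, Multiset.coe_countP]
  have hsplit := List.take_append_drop n l
  have hcnt : List.countP (fun x => decide (x < l[n])) l
      = List.countP (fun x => decide (x < l[n])) (l.take n)
        + List.countP (fun x => decide (x < l[n])) (l.drop n) := by
    rw [← List.countP_append, hsplit]
  have h0 : List.countP (fun x => decide (x < l[n])) (l.drop n) = 0 := by
    rw [List.countP_eq_zero]
    intro a ha
    rw [List.mem_drop_iff_getElem] at ha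
    obtain ⟨i, hi, rfl⟩ := ha
    have : l.get ⟨n, hn⟩ ≤ l.get ⟨n + i, by omega⟩ := by
      apply (Multiset.pairwise_sort s (· ≤ ·)).rel_get_of_le
      exact Fin.mk_le_mk.mpr (by omega)
    simp only [List.get_eq_getElem] at this
    simp [not_lt, this]
  have h1 : List.countP (fun x => decide (x < l[n])) (l.take n) ≤ n := by
    calc _ ≤ (l.take n).length := List.countP_le_length
    _ ≤ n := by rw [List.length_take]; omega
  omega

section scratch

variable {n : ℕ} (hn : 0 < n) {t : ℝ} (ht : t ∈ Set.Icc (0:ℝ) 1)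
  (v : Fin n → ℝ) (hv : ∀ i, v i ∈ Set.Icc (0:ℝ) 1)

lemma card_S : Multiset.card ((Multiset.range (n + 1)).map (fun k => ladder n k t)
    + Finset.univ.val.map v) = 2*n+1 := by
  simp [Multiset.card_add, Multiset.card_map, Multiset.card_range]
  omega

lemma countP_votes (p : ℝ → Prop) [DecidablePred p] :
    Multiset.countP p (Finset.univ.val.map v) = (Finset.univ.filter (fun i => p (v i))).card := by
  rw [Multiset.countP_map]
  rfl

lemma countP_phantoms (p : ℝ → Prop) [DecidablePred p] :
    Multiset.countP p ((Multiset.range (n + 1)).map (fun k => ladder n k t))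
      = ((Finset.range (n+1)).filter (fun k => p (ladder n k t))).card := by
  rw [Multiset.countP_map]
  rfl

end scratch

section main

variable {n : ℕ} {t : ℝ} {v : Fin n → ℝ}

lemma ladder_med_mem_Icc (ht : t ∈ Set.Icc (0:ℝ) 1) (hv : ∀ i, v i ∈ Set.Icc (0:ℝ) 1) :
    projMed n (fun k => ladder n k t) v ∈ Set.Icc (0:ℝ) 1 := by
  have hmem := med_mem (card_S (t := t) v)
  rw [Multiset.mem_add] at hmem
  rcases hmem with hmem | hmem
  · rw [Multiset.mem_map] at hmem
    obtain ⟨k, _, hk⟩ := hmem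
    rw [projMed, ← hk, ladder]
    constructor
    · exact le_max_right _ _
    · apply max_le _ zero_le_one
      have : (k:ℝ)/(n:ℝ) ≥ 0 := by positivity
      linarith [ht.2]
  · rw [Multiset.mem_map] at hmem
    obtain ⟨i, _, hi⟩ := hmem
    rw [projMed, ← hi]
    exact hv i

end main

section main2

variable {n : ℕ} {t : ℝ} {v : Fin n → ℝ}

lemma ladder_sum_ge (hn : 0 < n) (ht : t ∈ Set.Icc (0:ℝ) 1)
    (hv : ∀ i, v i ∈ Set.Icc (0:ℝ) 1) :
    projMed n (fun k => ladder n k t) v * ((n:ℝ) * (1 - t + projMed n (fun k => ladder n k t) v))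
      ≤ ∑ i, v i := by
  classical
  set A := projMed n (fun k => ladder n k t) v with hAdef
  have hA01 := ladder_med_mem_Icc ht hv
  rcases eq_or_lt_of_le hA01.1 with h0 | hApos
  · rw [show A = 0 from h0.symm]
    simpa using Finset.sum_nonneg fun i _ => (hv i).1
  have hcard : Multiset.card ((Multiset.range (n + 1)).map (fun k => ladder n k t)
      + Finset.univ.val.map v) = 2*n+1 := card_S v
  have hlt := med_countP_lt hcard
  have hge : n + 1 ≤ Multiset.countP (fun x => A ≤ x)
      ((Multiset.range (n + 1)).map (fun k => ladder n k t) + Finset.univ.val.map v) := by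
    have hcc := Multiset.card_eq_countP_add_countP (fun x => A ≤ x)
      ((Multiset.range (n + 1)).map (fun k => ladder n k t) + Finset.univ.val.map v)
    have hcompl : Multiset.countP (fun x => ¬ A ≤ x)
        ((Multiset.range (n + 1)).map (fun k => ladder n k t) + Finset.univ.val.map v)
        = Multiset.countP (fun x => x < A)
        ((Multiset.range (n + 1)).map (fun k => ladder n k t) + Finset.univ.val.map v) := by
      apply Multiset.countP_congr rfl
      intro x _
      simp [not_le]
    rw [hcompl] at hcc
    have : med n ((Multiset.range (n + 1)).map (fun k => ladder n k t)
        + Finset.univ.val.map v) = A := rfl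
    rw [this] at hlt
    omega
  rw [Multiset.countP_add, countP_votes, countP_phantoms] at hge
  set Kp := ((Finset.range (n+1)).filter (fun k => A ≤ ladder n k t)).card with hKp
  set F := (Finset.univ.filter (fun i : Fin n => A ≤ v i)) with hF
  have hcVle : F.card ≤ n := by
    calc F.card ≤ (Finset.univ : Finset (Fin n)).card := Finset.card_filter_le _ _
    _ = n := by simp
  have hKp1 : 1 ≤ Kp := by omega
  have htA : 0 ≤ t - A := by
    obtain ⟨k, hk⟩ := Finset.card_pos.mp (by omega : 0 < Kp)
    rw [Finset.mem_filter] at hk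
    have : A ≤ t - (k:ℝ)/(n:ℝ) := by
      rcases le_max_iff.mp hk.2 with h | h
      · exact h
      · linarith
    have : (0:ℝ) ≤ (k:ℝ)/(n:ℝ) := by positivity
    linarith
  have hKple : (Kp : ℝ) ≤ (n:ℝ) * (t - A) + 1 := by
    have hsub : (Finset.range (n+1)).filter (fun k => A ≤ ladder n k t)
        ⊆ Finset.range (⌊(n:ℝ) * (t - A)⌋₊ + 1) := by
      intro k hk
      rw [Finset.mem_filter] at hk
      have hk2 : A ≤ t - (k:ℝ)/(n:ℝ) := by
        rcases le_max_iff.mp hk.2 with h | h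
        · exact h
        · linarith
      have hkn : (k:ℝ) ≤ (n:ℝ) * (t - A) := by
        have hn' : (0:ℝ) < n := by exact_mod_cast hn
        have h3 : (k:ℝ)/(n:ℝ) ≤ t - A := by linarith
        have := (div_le_iff₀ hn').mp h3
        linarith
      rw [Finset.mem_range, Nat.lt_succ_iff]
      exact Nat.le_floor hkn
    calc (Kp:ℝ) ≤ ((⌊(n:ℝ) * (t - A)⌋₊ + 1 : ℕ) : ℝ) := by
          exact_mod_cast Finset.card_le_card hsub |>.trans (by rw [Finset.card_range])
    _ ≤ (n:ℝ) * (t - A) + 1 := by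
          push_cast
          have := Nat.floor_le (by positivity : (0:ℝ) ≤ (n:ℝ) * (t - A))
          linarith
  have hsumF : (F.card : ℝ) * A ≤ ∑ i ∈ F, v i := by
    have := Finset.card_nsmul_le_sum F v A (fun i hi => (Finset.mem_filter.mp hi).2)
    simpa [nsmul_eq_mul] using this
  have hsumsub : ∑ i ∈ F, v i ≤ ∑ i, v i :=
    Finset.sum_le_sum_of_subset_of_nonneg (Finset.subset_univ F)
      (fun i _ _ => (hv i).1)
  have hcV : (n:ℝ) + 1 - (Kp:ℝ) ≤ (F.card : ℝ) := by
    have : (n:ℝ) + 1 ≤ (Kp:ℝ) + (F.card:ℝ) := by exact_mod_cast hge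
    linarith
  nlinarith [hA01.1, hApos]

end main2

section main3

variable {n : ℕ} {t : ℝ} {v : Fin n → ℝ}

lemma ladder_sum_le (hn : 0 < n) (ht : t ∈ Set.Icc (0:ℝ) 1)
    (hv : ∀ i, v i ∈ Set.Icc (0:ℝ) 1) :
    ∑ i, v i ≤ (n:ℝ) * (1 - (t - projMed n (fun k => ladder n k t) v)
      * (1 - projMed n (fun k => ladder n k t) v)) := by
  classical
  set A := projMed n (fun k => ladder n k t) v with hAdef
  have hA01 := ladder_med_mem_Icc ht hv
  have hn' : (0:ℝ) < n := by exact_mod_cast hn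
  have hcard : Multiset.card ((Multiset.range (n + 1)).map (fun k => ladder n k t)
      + Finset.univ.val.map v) = 2*n+1 := card_S v
  have hgt := med_countP_gt hcard
  have hmedA : med n ((Multiset.range (n + 1)).map (fun k => ladder n k t)
      + Finset.univ.val.map v) = A := rfl
  rw [hmedA, Multiset.countP_add, countP_votes, countP_phantoms] at hgt
  set K := ((Finset.range (n+1)).filter (fun k => A < ladder n k t)).card with hK
  set G := (Finset.univ.filter (fun i : Fin n => A < v i)) with hG
  -- phantom count lower bound
  have hceil : Nat.ceil ((n:ℝ) * (t - A)) ≤ K := by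
    have : Finset.range (Nat.ceil ((n:ℝ) * (t - A)))
        ⊆ (Finset.range (n+1)).filter (fun k => A < ladder n k t) := by
      intro k hk
      rw [Finset.mem_range] at hk
      have hk' : (k:ℝ) < (n:ℝ) * (t - A) := Nat.lt_ceil.mp hk
      have hcle : Nat.ceil ((n:ℝ) * (t - A)) ≤ n := by
        apply Nat.ceil_le.mpr
        nlinarith [ht.2, hA01.1]
      rw [Finset.mem_filter, Finset.mem_range]
      constructor
      · omega
      · have h1 : (k:ℝ)/(n:ℝ) < t - A := (div_lt_iff₀ hn').mpr (by linarith)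
        have h2 : A < t - (k:ℝ)/(n:ℝ) := by linarith
        exact lt_max_of_lt_left h2
    simpa using Finset.card_le_card this
  have hKreal : (n:ℝ) * (t - A) ≤ (K:ℝ) := by
    calc (n:ℝ) * (t - A) ≤ (Nat.ceil ((n:ℝ) * (t - A)) : ℝ) := Nat.le_ceil _
    _ ≤ (K:ℝ) := by exact_mod_cast hceil
  -- split sum
  have hsplit : ∑ i ∈ G, v i + ∑ i ∈ Finset.univ.filter (fun i => ¬ A < v i), v i
      = ∑ i, v i := Finset.sum_filter_add_sum_filter_not _ _ _
  have h1 : ∑ i ∈ G, v i ≤ (G.card : ℝ) * 1 := by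
    have := Finset.sum_le_card_nsmul G v 1 (fun i _ => (hv i).2)
    simpa [nsmul_eq_mul] using this
  have h2 : ∑ i ∈ Finset.univ.filter (fun i => ¬ A < v i), v i
      ≤ ((Finset.univ.filter (fun i : Fin n => ¬ A < v i)).card : ℝ) * A := by
    have := Finset.sum_le_card_nsmul (Finset.univ.filter (fun i : Fin n => ¬ A < v i)) v A
      (fun i hi => not_lt.mp (Finset.mem_filter.mp hi).2)
    simpa [nsmul_eq_mul] using this
  have hcards : G.card + (Finset.univ.filter (fun i : Fin n => ¬ A < v i)).card = n := by
    rw [Finset.card_filter_add_card_filter_not]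
    simp
  -- real arithmetic
  have hGle : (G.card : ℝ) + (K:ℝ) ≤ (n:ℝ) := by
    have : K + G.card ≤ n := hgt
    exact_mod_cast by omega
  have hcards' : ((Finset.univ.filter (fun i : Fin n => ¬ A < v i)).card : ℝ)
      = (n:ℝ) - (G.card:ℝ) := by
    have := hcards; push_cast [← this]; ring
  nlinarith [hA01.1, hA01.2, Finset.card_filter_le Finset.univ (fun i : Fin n => ¬ A < v i)]

end main3

/-- The Ladder mechanism underfunds by at most `(1/2)(1 - 1/m)`. -/
theorem ladder_underfunds_by_at_most
    (n m : ℕ) (hn : 0 < n) (hm : 0 < m)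
    (P : Fin n → Fin m → ℝ) (hP : IsProfile P)
    (t : ℝ) (ht : IsNormPoint (ladder n) P t) (j : Fin m) :
    mean P j - output (ladder n) P t j ≤ 1 / 2 * (1 - 1 / (m : ℝ)) := by
  classical
  obtain ⟨hv01, hrow⟩ := hP
  obtain ⟨htI, hnorm⟩ := ht
  have hn' : (0:ℝ) < n := by exact_mod_cast hn
  set A : Fin m → ℝ := fun j' => output (ladder n) P t j' with hA
  have hsumA : ∑ j', A j' = 1 := hnorm
  have hA01 : ∀ j', A j' ∈ Set.Icc (0:ℝ) 1 := fun j' =>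
    ladder_med_mem_Icc htI (fun i => hv01 i j')
  have hsummean : ∑ j', mean P j' = 1 := by
    unfold mean
    rw [← Finset.sum_div, Finset.sum_comm]
    simp only [hrow]
    rw [Finset.sum_const, Finset.card_univ, Fintype.card_fin, nsmul_eq_mul, mul_one]
    field_simp
  have hB1 : mean P j - A j ≤ (t - A j) * A j + 1 - t := by
    have hsle := ladder_sum_le hn htI (v := fun i => P i j) (fun i => hv01 i j)
    have hmle : mean P j ≤ 1 - (t - A j) * (1 - A j) := by
      rw [mean, div_le_iff₀ hn']
      calc ∑ i, P i j ≤ (n:ℝ) * (1 - (t - A j) * (1 - A j)) := hsle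
      _ = (1 - (t - A j) * (1 - A j)) * (n:ℝ) := by ring
    nlinarith [hmle]
  have hover : ∀ j', A j' - mean P j' ≤ A j' * (t - A j') := by
    intro j'
    have hsge := ladder_sum_ge hn htI (v := fun i => P i j') (fun i => hv01 i j')
    have : A j' * (1 - t + A j') ≤ mean P j' := by
      rw [mean, le_div_iff₀ hn']
      calc A j' * (1 - t + A j') * (n:ℝ)
          = A j' * ((n:ℝ) * (1 - t + A j')) := by ring
      _ ≤ ∑ i, P i j' := hsge
    nlinarith [this]
  rcases eq_or_lt_of_le (show 1 ≤ m from hm) with hm1 | hm2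
  · -- m = 1
    have hm1' : m = 1 := hm1.symm
    subst hm1'
    have hj : j = 0 := Subsingleton.elim _ _
    have h1 : mean P j = 1 := by rw [← hsummean, hj, Fin.sum_univ_one]
    have h2 : A j = 1 := by rw [← hsumA, hj, Fin.sum_univ_one]
    have h2' : output (ladder n) P t j = 1 := h2
    rw [h1, h2']
    norm_num
  · -- m ≥ 2
    set x := A j with hx
    set U := mean P j - A j with hU
    have hsAe : ∑ j' ∈ Finset.univ.erase j, A j' = 1 - x := by
      rw [Finset.sum_erase_eq_sub (Finset.mem_univ j), hsumA]
    have hsme : ∑ j' ∈ Finset.univ.erase j, mean P j' = 1 - mean P j := by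
      rw [Finset.sum_erase_eq_sub (Finset.mem_univ j), hsummean]
    have hUeq : U = ∑ j' ∈ Finset.univ.erase j, (A j' - mean P j') := by
      rw [Finset.sum_sub_distrib, hsAe, hsme]; ring
    have hU2 : U ≤ t * (1 - x) - ∑ j' ∈ Finset.univ.erase j, (A j')^2 := by
      calc U ≤ ∑ j' ∈ Finset.univ.erase j, A j' * (t - A j') := by
            rw [hUeq]; exact Finset.sum_le_sum fun j' _ => hover j'
      _ = t * (∑ j' ∈ Finset.univ.erase j, A j')
            - ∑ j' ∈ Finset.univ.erase j, (A j')^2 := by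
            rw [Finset.mul_sum, ← Finset.sum_sub_distrib]
            exact Finset.sum_congr rfl fun j' _ => by ring
      _ = t * (1 - x) - ∑ j' ∈ Finset.univ.erase j, (A j')^2 := by rw [hsAe]
    have hcauchy : (1 - x)^2 ≤ ((m:ℝ) - 1) * ∑ j' ∈ Finset.univ.erase j, (A j')^2 := by
      have := sq_sum_le_card_mul_sum_sq (s := Finset.univ.erase j) (f := A)
      rw [hsAe] at this
      have hcard : ((Finset.univ.erase j).card : ℝ) = (m:ℝ) - 1 := by
        rw [Finset.card_erase_of_mem (Finset.mem_univ j), Finset.card_univ, Fintype.card_fin]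
        have : 1 ≤ m := hm
        push_cast [Nat.cast_sub this]
        ring
      rwa [hcard] at this
    set q := ∑ j' ∈ Finset.univ.erase j, (A j')^2 with hq
    have hM2 : (2:ℝ) ≤ (m:ℝ) := by exact_mod_cast hm2
    have h2U : 2 * U ≤ 1 - x^2 - q := by nlinarith [hB1, hU2]
    have hM0 : (0:ℝ) ≤ (m:ℝ) := by linarith
    have h3 := mul_le_mul_of_nonneg_left h2U hM0
    have h4 := mul_le_mul_of_nonneg_left hcauchy hM0
    have hstep : 1 ≤ (m:ℝ) * x^2 + (m:ℝ) * q := by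
      nlinarith [h4, sq_nonneg ((m:ℝ) * x - 1), hM2, sq_nonneg x]
    have hkey : 2 * (m:ℝ) * U ≤ (m:ℝ) - 1 := by nlinarith [h3, hstep]
    have hrw : (1:ℝ) / 2 * (1 - 1 / (m:ℝ)) = ((m:ℝ) - 1) / (2 * (m:ℝ)) := by
      field_simp
    rw [hU] at hkey ⊢  -- goal uses mean P j - output = U
    rw [hrw, le_div_iff₀ (by linarith : (0:ℝ) < 2 * (m:ℝ))]
    linarith
end

section
/- The Ladder mechanism is proportional: for every n,m and every preference profile P on n voters and m projects in which every voter is single-minded (i.e., P_{ij} ∈ {0,1} for all i,j), the Ladder mechanism outputs A(P)_j = P̄_j for all projects j. -/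
open Finset

/-- Auxiliary: characterize the median by counting. -/
lemma med_eq_of_counts {n : ℕ} {s : Multiset ℝ} (hcard : Multiset.card s = 2*n+1) {x : ℝ}
    (h1 : n < Multiset.countP (· ≤ x) s)
    (h2 : Multiset.countP (· < x) s ≤ n) : med n s = x := by
  set l := s.sort (· ≤ ·) with hl
  have hls : (l : Multiset ℝ) = s := Multiset.sort_eq s _
  have hlen : l.length = 2*n+1 := by
    have := congrArg Multiset.card hls
    simpa [hcard] using this
  have hsort : l.Pairwise (· ≤ ·) := Multiset.pairwise_sort _ _
  have hn : n < l.length := by omega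
  have hmed : med n s = l[n] := List.getD_eq_getElem l 0 hn
  have hc1 : n < l.countP (· ≤ x) := by
    have : Multiset.countP (· ≤ x) s = l.countP (fun a => decide (a ≤ x)) := by
      rw [← hls]; rfl
    simpa [this] using h1
  have hc2 : l.countP (fun a => decide (a < x)) ≤ n := by
    have : Multiset.countP (· < x) s = l.countP (fun a => decide (a < x)) := by
      rw [← hls]; rfl
    simpa [this] using h2
  rw [hmed]
  rcases lt_trichotomy l[n] x with h | h | h
  · exfalso
    have htk : ∀ a ∈ l.take (n+1), decide (a < x) = true := by
      intro a ha
      rw [List.mem_iff_getElem] at ha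
      obtain ⟨i, hi, rfl⟩ := ha
      have hi' : i < n+1 := by simp [List.length_take] at hi; omega
      rw [List.getElem_take]
      have : l[i]'(by omega) ≤ l[n] := by
        rcases eq_or_lt_of_le (Nat.lt_succ_iff.mp hi') with h' | h'
        · subst h'; rfl
        · exact List.pairwise_iff_getElem.mp hsort i n (by omega) hn h'
      simpa using lt_of_le_of_lt this h
    have h1' : (l.take (n+1)).countP (fun a => decide (a < x)) = n+1 := by
      rw [List.countP_eq_length.mpr htk, List.length_take]; omega
    have : n+1 ≤ l.countP (fun a => decide (a < x)) := by
      calc n+1 = (l.take (n+1)).countP (fun a => decide (a < x)) := h1'.symm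
      _ ≤ (l.take (n+1)).countP _ + (l.drop (n+1)).countP (fun a => decide (a < x)) :=
          Nat.le_add_right _ _
      _ = l.countP (fun a => decide (a < x)) := by
          rw [← List.countP_append, List.take_append_drop]
    omega
  · exact h
  · exfalso
    have hdr : ∀ a ∈ l.drop n, decide (a ≤ x) = false := by
      intro a ha
      rw [List.mem_iff_getElem] at ha
      obtain ⟨i, hi, rfl⟩ := ha
      rw [List.getElem_drop]
      have : l[n] ≤ l[n+i]'(by simp [List.length_drop] at hi; omega) := by
        rcases Nat.eq_zero_or_pos i with h' | h'
        · subst h'; rfl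
        · exact List.pairwise_iff_getElem.mp hsort n (n+i) hn
            (by simp [List.length_drop] at hi; omega) (by omega)
      simp only [decide_eq_false_iff_not, not_le]
      exact lt_of_lt_of_le h this
    have hd0 : (l.drop n).countP (fun a => decide (a ≤ x)) = 0 := by
      rw [List.countP_eq_zero]
      intro a ha; simpa using hdr a ha
    have : l.countP (fun a => decide (a ≤ x)) ≤ n := by
      calc l.countP (fun a => decide (a ≤ x))
          = (l.take n).countP _ + (l.drop n).countP (fun a => decide (a ≤ x)) := by
            rw [← List.countP_append, List.take_append_drop]
      _ ≤ (l.take n).length + 0 := by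
            rw [hd0]; exact Nat.add_le_add List.countP_le_length le_rfl
      _ ≤ n := by rw [List.length_take]; omega
    omega

lemma ladder_antitone (n : ℕ) (t : ℝ) {k l : ℕ} (h : k ≤ l) :
    ladder n l t ≤ ladder n k t := by
  unfold ladder
  apply max_le_max _ le_rfl
  apply sub_le_sub_left
  rcases Nat.eq_zero_or_pos n with h0 | h0
  · simp [h0]
  · rw [div_le_div_iff_of_pos_right (by exact_mod_cast h0)]
    exact_mod_cast h

lemma projMed_single_minded (n : ℕ) (hn : 0 < n) (t : ℝ) (ht1 : t ≤ 1)
    (votes : Fin n → ℝ) (hv : ∀ i, votes i = 0 ∨ votes i = 1) :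
    projMed n (fun k => ladder n k t) votes
      = ladder n (n - (univ.filter (fun i => votes i = 1)).card) t := by
  classical
  set c := (univ.filter (fun i => votes i = 1)).card with hcdef
  have hc : c ≤ n := by
    simpa using Finset.card_filter_le univ (fun i => votes i = 1)
  set x := ladder n (n - c) t with hxdef
  have hx0 : (0:ℝ) ≤ x := le_max_right _ _
  have hx1 : x ≤ 1 := by
    apply max_le _ zero_le_one
    have : ((n - c : ℕ) : ℝ) / n ≥ 0 := by positivity
    linarith
  have hzero : (univ.filter (fun i => votes i = 0)).card = n - c := by
    have h0 := Finset.card_filter_add_card_filter_not (s := univ)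
      (p := fun i => votes i = 1)
    have he : univ.filter (fun i => ¬ votes i = 1) = univ.filter (fun i => votes i = 0) := by
      apply Finset.filter_congr
      intro i _
      rcases hv i with h | h <;> simp [h]
    rw [he] at h0
    simp only [Finset.card_univ, Fintype.card_fin] at h0
    omega
  rw [projMed]
  apply med_eq_of_counts
  · simp [Multiset.card_map]
    ring
  · rw [Multiset.countP_add]
    have hph : c + 1 ≤ Multiset.countP (· ≤ x)
        ((Multiset.range (n+1)).map (fun k => ladder n k t)) := by
      rw [Multiset.countP_map]
      have hsub : Finset.Icc (n - c) n ⊆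
          Finset.filter (fun k => ladder n k t ≤ x) (Finset.range (n+1)) := by
        intro k hk
        simp only [Finset.mem_Icc] at hk
        simp only [Finset.mem_filter, Finset.mem_range]
        exact ⟨by omega, ladder_antitone n t hk.1⟩
      have := Finset.card_le_card hsub
      rw [Nat.card_Icc] at this
      have hr : Multiset.card
            (Multiset.filter (fun a => (fun k => ladder n k t) a ≤ x) (Multiset.range (n+1)))
          = (Finset.filter (fun k => ladder n k t ≤ x) (Finset.range (n+1))).card := by
        rw [← Finset.range_val, ← Finset.filter_val]
        rfl
      rw [hr]
      omega
    have hvt : n - c ≤ Multiset.countP (· ≤ x) (univ.val.map votes) := by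
      rw [Multiset.countP_map]
      have hsub : Finset.filter (fun i => votes i = 0) univ ⊆
          Finset.filter (fun i => votes i ≤ x) univ := by
        intro i hi
        simp only [Finset.mem_filter] at hi ⊢
        exact ⟨hi.1, by rw [hi.2]; exact hx0⟩
      have := Finset.card_le_card hsub
      have hr : Multiset.card (Multiset.filter (fun a => votes a ≤ x) univ.val)
          = (Finset.filter (fun i => votes i ≤ x) univ).card := by
        rw [← Finset.filter_val]; rfl
      rw [hr]
      omega
    omega
  · rw [Multiset.countP_add]
    have hph : Multiset.countP (· < x)
        ((Multiset.range (n+1)).map (fun k => ladder n k t)) ≤ c := by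
      rw [Multiset.countP_map]
      have hr : Multiset.card
            (Multiset.filter (fun a => (fun k => ladder n k t) a < x) (Multiset.range (n+1)))
          = (Finset.filter (fun k => ladder n k t < x) (Finset.range (n+1))).card := by
        rw [← Finset.range_val, ← Finset.filter_val]; rfl
      rw [hr]
      have hsub : Finset.filter (fun k => ladder n k t < x) (Finset.range (n+1)) ⊆
          Finset.Ioc (n - c) n := by
        intro k hk
        simp only [Finset.mem_filter, Finset.mem_range] at hk
        simp only [Finset.mem_Ioc]
        refine ⟨?_, by omega⟩
        by_contra hle
        exact absurd (ladder_antitone n t (Nat.le_of_not_lt hle)) (not_le.mpr hk.2)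
      have := Finset.card_le_card hsub
      rw [Nat.card_Ioc] at this
      omega
    have hvt : Multiset.countP (· < x) (univ.val.map votes) ≤ n - c := by
      rw [Multiset.countP_map]
      have hr : Multiset.card (Multiset.filter (fun a => votes a < x) univ.val)
          = (Finset.filter (fun i => votes i < x) univ).card := by
        rw [← Finset.filter_val]; rfl
      rw [hr]
      have hsub : Finset.filter (fun i => votes i < x) univ ⊆
          Finset.filter (fun i => votes i = 0) univ := by
        intro i hi
        simp only [Finset.mem_filter] at hi ⊢
        refine ⟨hi.1, ?_⟩
        rcases hv i with h | h
        · exact h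
        · exfalso; rw [h] at hi; exact absurd hx1 (not_le.mpr hi.2)
      have := Finset.card_le_card hsub
      omega
    omega

/-- The Ladder mechanism is proportional. -/
theorem ladder_proportional
    (n m : ℕ) (hn : 0 < n) (hm : 0 < m)
    (P : Fin n → Fin m → ℝ) (hP : IsProfile P)
    (hsm : ∀ i j, P i j = 0 ∨ P i j = 1)
    (t : ℝ) (ht : IsNormPoint (ladder n) P t) (j : Fin m) :
    output (ladder n) P t j = mean P j := by
  classical
  obtain ⟨⟨ht0, ht1⟩, hsum⟩ := ht
  set c : Fin m → ℕ := fun j => (univ.filter (fun i => P i j = 1)).card with hcdef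
  have hproj : ∀ j, projMed n (fun k => ladder n k t) (fun i => P i j)
      = ladder n (n - c j) t := fun j =>
    projMed_single_minded n hn t ht1 _ (fun i => hsm i j)
  have hcle : ∀ j, c j ≤ n := fun j => by
    simpa using Finset.card_filter_le univ (fun i => P i j = 1)
  have hnpos : (0:ℝ) < n := by exact_mod_cast hn
  have hcol : ∀ j, ∑ i, P i j = (c j : ℝ) := by
    intro j
    have h1 : ∀ i ∈ univ, P i j = if P i j = 1 then (1:ℝ) else 0 := by
      intro i _
      rcases hsm i j with h | h <;> simp [h]
    rw [Finset.sum_congr rfl h1, Finset.sum_boole]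
  have hmean : ∀ j, mean P j = (c j : ℝ) / n := by
    intro j
    rw [mean, hcol j]
  have hsumc : ∑ j, ((c j : ℝ)) = (n : ℝ) := by
    rw [Finset.sum_congr rfl (fun j _ => (hcol j).symm), Finset.sum_comm]
    simp [hP.2]
  have hle : ∀ j, ladder n (n - c j) t ≤ (c j : ℝ) / n := by
    intro j
    apply max_le _ (by positivity)
    have hcast : ((n - c j : ℕ) : ℝ) = (n : ℝ) - (c j : ℝ) := by
      exact_mod_cast Nat.cast_sub (hcle j)
    rw [hcast]
    have heq : ((n:ℝ) - (c j : ℝ)) / n + (c j : ℝ) / n = 1 := by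
      field_simp
      ring
    linarith
  have hsums : ∑ j, ladder n (n - c j) t = ∑ j, (c j : ℝ) / n := by
    have h1 : ∑ j, ladder n (n - c j) t = 1 := by
      rw [← hsum]
      exact Finset.sum_congr rfl (fun j _ => (hproj j).symm)
    have h2 : ∑ j, (c j : ℝ) / n = 1 := by
      rw [← Finset.sum_div, hsumc, div_self (ne_of_gt hnpos)]
    rw [h1, h2]
  have hkey := (Finset.sum_eq_sum_iff_of_le (fun j _ => hle j)).mp hsums j (mem_univ j)
  rw [output, hproj j, hkey, hmean j]
end
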